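/- arXiv:2602.19771 — 2 statements merged into one kernel-verified Lean document; each statement's English description precedes it below -/
import Mathlib

section
/- For every positive integer N, the number of subgroups H of (ℤ/Nℤ) × (ℤ/Nℤ) such that H is cyclic of order N equals κ(N) := N · ∏_{p prime, p ∣ N} (1 + 1/p). (Equivalently, the cardinality of the set of cyclic subgroups of cardinality N of (ZMod N × ZMod N), cast to ℚ, equals (N : ℚ) · ∏_{p ∈ N.primeFactors} (1 + 1/p).) -/
/-!
Every element of order `N` generates a cyclic subgroup of order `N`, and each such subgroup has
exactly `φ N` generators, so the number of subgroups times `φ N` is the number of elements of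
order `N` in `(ℤ/Nℤ)²`. For `d ∣ N` the `d`-torsion of `(ℤ/Nℤ)²` has `d²` elements, so by Möbius
inversion that number is Jordan's totient `J₂ N = N² ∏_{p ∣ N} (1 - p⁻²)`. Dividing by
`φ N = N ∏_{p ∣ N} (1 - p⁻¹)` leaves `N ∏_{p ∣ N} (1 + p⁻¹)`.
-/

open Finset ArithmeticFunction AddSubgroup
open scoped ArithmeticFunction.Moebius Nat

namespace ArithmeticFunction

theorem moebius_mul_apply_prime_pow_succ {R : Type*} [Ring R] (f : ArithmeticFunction R)
    {p : ℕ} (hp : p.Prime) (e : ℕ) :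
    ((μ : ArithmeticFunction R) * f) (p ^ (e + 1)) = f (p ^ (e + 1)) - f (p ^ e) := by
  have hsum (m : ℕ) :
      f (p ^ m) = ∑ i ∈ range (m + 1), ((μ : ArithmeticFunction R) * f) (p ^ i) := by
    rw [← Nat.sum_divisors_prime_pow hp, ← coe_zeta_mul_apply, ← mul_assoc,
      coe_zeta_mul_coe_moebius, one_mul]
  rw [hsum (e + 1), sum_range_succ, hsum e, add_sub_cancel_left]

def jordanTotient (k : ℕ) : ArithmeticFunction ℤ := μ * (pow k : ArithmeticFunction ℕ)

theorem isMultiplicative_jordanTotient (k : ℕ) : (jordanTotient k).IsMultiplicative :=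
  isMultiplicative_moebius.mul isMultiplicative_pow.natCast

theorem jordanTotient_apply_prime_pow_succ (k : ℕ) {p : ℕ} (hp : p.Prime) (e : ℕ) :
    jordanTotient k (p ^ (e + 1)) = ((p : ℤ) ^ (e + 1)) ^ k - ((p : ℤ) ^ e) ^ k := by
  rw [jordanTotient, ← intCoe_int μ, moebius_mul_apply_prime_pow_succ _ hp]
  simp [pow_apply, hp.ne_zero]

theorem jordanTotient_eq_mul_prod (k : ℕ) {n : ℕ} (hn : n ≠ 0) :
    (jordanTotient k n : ℚ) = n ^ k * ∏ p ∈ n.primeFactors, (1 - ((p : ℚ) ^ k)⁻¹) := by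
  have hn' : (n : ℚ) = ∏ p ∈ n.primeFactors, (p : ℚ) ^ n.factorization p := by
    exact_mod_cast (Nat.prod_factorization_pow_eq_self hn).symm
  rw [(isMultiplicative_jordanTotient k).multiplicative_factorization _ hn, Finsupp.prod,
    Nat.support_factorization, Int.cast_prod, hn', ← prod_pow, ← prod_mul_distrib]
  refine prod_congr rfl fun p hp => ?_
  have hp' := Nat.prime_of_mem_primeFactors hp
  obtain ⟨e, he⟩ := Nat.exists_eq_add_one_of_ne_zero
    (hp'.factorization_pos_of_dvd hn (Nat.dvd_of_mem_primeFactors hp)).ne'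
  have hp0 : (p : ℚ) ≠ 0 := Nat.cast_ne_zero.mpr hp'.ne_zero
  rw [he, jordanTotient_apply_prime_pow_succ k hp']
  push_cast
  field_simp
  ring

end ArithmeticFunction

namespace AddSubgroup

variable {G : Type*} [AddGroup G]

theorem zmultiples_eq_iff {H : AddSubgroup G} [Finite H] {x : G} :
    zmultiples x = H ↔ x ∈ H ∧ addOrderOf x = Nat.card H := by
  constructor
  · rintro rfl
    exact ⟨mem_zmultiples x, (Nat.card_zmultiples x).symm⟩
  · rintro ⟨hx, hord⟩
    exact eq_of_le_of_card_ge (zmultiples_le.mpr hx) (by rw [Nat.card_zmultiples, hord])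

theorem card_zmultiples_eq_eq_totient (H : AddSubgroup G) [Finite H] [IsAddCyclic H] :
    Nat.card {x : G // zmultiples x = H} = φ (Nat.card H) := by
  classical
  have : Fintype H := Fintype.ofFinite H
  calc Nat.card {x : G // zmultiples x = H}
      = Nat.card {h : H // addOrderOf h = Nat.card H} :=
        Nat.card_congr <| (Equiv.subtypeEquivRight fun _ => zmultiples_eq_iff).trans
          ((Equiv.subtypeSubtypeEquivSubtypeInter (· ∈ H) _).symm.trans
            (Equiv.subtypeEquivRight fun h => by rw [addOrderOf_coe]))
    _ = φ (Nat.card H) := by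
      rw [Nat.card_eq_fintype_card, Fintype.card_subtype, Nat.card_eq_fintype_card]
      exact IsAddCyclic.card_addOrderOf_eq_totient dvd_rfl

end AddSubgroup

theorem card_addOrderOf_eq_card_isAddCyclic_mul_totient {G : Type*} [AddGroup G] [Fintype G]
    [DecidableEq G] (n : ℕ) :
    #{x : G | addOrderOf x = n}
      = Nat.card {H : AddSubgroup G // IsAddCyclic H ∧ Nat.card H = n} * φ n := by
  set S := {H : AddSubgroup G // IsAddCyclic H ∧ Nat.card H = n}
  have : Fintype S := Fintype.ofFinite S
  let e : {x : G // addOrderOf x = n} ≃ Σ H : S, {x : G // zmultiples x = H} :=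
    { toFun x := ⟨⟨zmultiples x, inferInstance, by rw [Nat.card_zmultiples, x.2]⟩, ⟨x, rfl⟩⟩
      invFun y := ⟨y.2, by rw [← Nat.card_zmultiples, y.2.2, y.1.2.2]⟩
      left_inv _ := rfl
      right_inv y := Sigma.subtype_ext (Subtype.ext y.2.2) rfl }
  have hfiber (H : S) : Nat.card {x : G // zmultiples x = H} = φ n := by
    have : IsAddCyclic H := H.2.1
    rw [card_zmultiples_eq_eq_totient, H.2.2]
  rw [← Fintype.card_subtype, ← Nat.card_eq_fintype_card, Nat.card_congr e, Nat.card_sigma,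
    sum_congr rfl fun H _ => hfiber H, sum_const, card_univ, smul_eq_mul, Nat.card_eq_fintype_card]

theorem IsAddCyclic.card_nsmul_eq_zero_of_dvd {G : Type*} [AddGroup G] [Fintype G]
    [DecidableEq G] [IsAddCyclic G] {n : ℕ} (hn : n ∣ Fintype.card G) :
    #{x : G | n • x = 0} = n := by
  rw [← sum_card_addOrderOf_eq_card_nsmul_eq_zero
    (ne_zero_of_dvd_ne_zero Fintype.card_ne_zero hn)]
  exact (sum_congr rfl fun m hm => IsAddCyclic.card_addOrderOf_eq_totient
    ((Nat.dvd_of_mem_divisors hm).trans hn)).trans (Nat.sum_totient n)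

theorem card_prod_nsmul_eq_zero {G H : Type*} [AddMonoid G] [AddMonoid H] [Fintype G]
    [Fintype H] [DecidableEq G] [DecidableEq H] (n : ℕ) :
    #{x : G × H | n • x = 0} = #{a : G | n • a = 0} * #{b : H | n • b = 0} := by
  rw [← card_product]
  congr 1
  ext ⟨a, b⟩
  simp [Prod.ext_iff]

theorem card_addOrderOf_prod_self_eq_jordanTotient {G : Type*} [AddGroup G] [Fintype G]
    [DecidableEq G] [IsAddCyclic G] {n : ℕ} (hn : n ∣ Fintype.card G) :
    (#{x : G × G | addOrderOf x = n} : ℤ) = jordanTotient 2 n := by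
  have hsum : ∀ m > 0, m ∈ {m | m ∣ Fintype.card G} →
      ∑ d ∈ m.divisors, (#{x : G × G | addOrderOf x = d} : ℤ) = pow 2 m := by
    intro m hm hmG
    rw [← Nat.cast_sum, sum_card_addOrderOf_eq_card_nsmul_eq_zero hm.ne', card_prod_nsmul_eq_zero,
      IsAddCyclic.card_nsmul_eq_zero_of_dvd hmG, pow_apply, if_neg (by omega), sq]
  rw [← (sum_eq_iff_sum_mul_moebius_eq_on _ fun _ _ hdvd hmG => hdvd.trans hmG).mp hsum n
    (Nat.pos_of_dvd_of_pos hn Fintype.card_pos) hn, jordanTotient, mul_apply]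
  simp only [natCoe_apply, Int.cast_id]

/-- For every positive integer `N`, the number of cyclic subgroups of order `N` of
`(ℤ/Nℤ) × (ℤ/Nℤ)`, cast to `ℚ`, equals `N · ∏_{p ∣ N prime} (1 + 1/p)`. -/
theorem card_cyclic_subgroups_of_order_eq_kappa (N : ℕ) (hN : 0 < N) :
    (Nat.card {H : AddSubgroup (ZMod N × ZMod N) // IsAddCyclic H ∧ Nat.card H = N} : ℚ)
      = (N : ℚ) * ∏ p ∈ N.primeFactors, (1 + 1 / (p : ℚ)) := by
  have : NeZero N := ⟨hN.ne'⟩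
  have hJ : ((Nat.card {H : AddSubgroup (ZMod N × ZMod N) // IsAddCyclic H ∧ Nat.card H = N}
      * φ N : ℕ) : ℤ) = jordanTotient 2 N := by
    rw [← card_addOrderOf_eq_card_isAddCyclic_mul_totient,
      card_addOrderOf_prod_self_eq_jordanTotient (ZMod.card N).symm.dvd]
  have hφ : (φ N : ℚ) ≠ 0 := Nat.cast_ne_zero.mpr (Nat.totient_pos.mpr hN).ne'
  refine mul_right_cancel₀ hφ ?_
  calc _ = (jordanTotient 2 N : ℚ) := by exact_mod_cast hJ
    _ = N ^ 2 * ∏ p ∈ N.primeFactors, (1 - ((p : ℚ) ^ 2)⁻¹) := jordanTotient_eq_mul_prod 2 hN.ne'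
    _ = _ := by
      rw [Nat.totient_eq_mul_prod_factors, mul_mul_mul_comm, ← prod_mul_distrib, sq]
      congr 1
      exact prod_congr rfl fun p _ => by ring
end

section
/- The quotient of the abelian group ℤ × ℤ × ℤ by the subgroup {(3m, 3n, −m − n) : m, n ∈ ℤ} (the subgroup generated by the two elements (3, 0, −1) and (0, 3, −1)) is isomorphic, as an abelian group, to ℤ × (ℤ/3ℤ). -/
private def fmap : (ℤ × ℤ × ℤ) →+ ℤ × ZMod 3 where
  toFun p := (p.1 + p.2.1 + 3 * p.2.2, (p.1 : ZMod 3))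
  map_zero' := by simp
  map_add' p q := by
    simp only [Prod.fst_add, Prod.snd_add, Prod.mk_add_mk, Prod.mk.injEq]
    constructor
    · ring
    · push_cast; ring

private lemma ker_eq :
    AddSubgroup.closure ({(3, 0, -1), (0, 3, -1)} : Set (ℤ × ℤ × ℤ)) = fmap.ker := by
  apply le_antisymm
  · rw [AddSubgroup.closure_le]
    rintro x (rfl | rfl) <;> simp [fmap, AddMonoidHom.mem_ker] <;> decide
  · rintro ⟨a, b, c⟩ h
    simp only [AddMonoidHom.mem_ker, fmap, AddMonoidHom.coe_mk, ZeroHom.coe_mk,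
      Prod.mk_eq_zero] at h
    obtain ⟨h1, h2⟩ := h
    obtain ⟨m, rfl⟩ := (ZMod.intCast_zmod_eq_zero_iff_dvd a 3).mp h2
    push_cast at h1 ⊢
    have hb : b = 3 * (-m - c) := by linarith
    have : (3 * m, b, c) = m • ((3, 0, -1) : ℤ × ℤ × ℤ) + (-m - c) • (0, 3, -1) := by
      rw [hb]
      simp [Prod.ext_iff]
      constructor <;> ring
    rw [this]
    exact add_mem (AddSubgroup.zsmul_mem _ (AddSubgroup.subset_closure (by simp)) _)
      (AddSubgroup.zsmul_mem _ (AddSubgroup.subset_closure (by simp)) _)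

private lemma fsurj : Function.Surjective fmap := by
  rintro ⟨x, y⟩
  obtain ⟨n, rfl⟩ := ZMod.intCast_surjective (n := 3) y
  exact ⟨(n, x - n, 0), by simp [fmap]⟩

/-- The quotient of `ℤ × ℤ × ℤ` by the subgroup generated by `(3, 0, -1)` and `(0, 3, -1)`
(that is, the subgroup `{(3m, 3n, -m-n) : m, n ∈ ℤ}`) is isomorphic, as an abelian group,
to `ℤ × (ℤ/3ℤ)`. -/
theorem quotient_closure_equiv_int_prod_zmod_three :
    Nonempty (((ℤ × ℤ × ℤ) ⧸
        AddSubgroup.closure ({(3, 0, -1), (0, 3, -1)} : Set (ℤ × ℤ × ℤ)))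
      ≃+ ℤ × ZMod 3) := by
  exact ⟨(QuotientAddGroup.quotientAddEquivOfEq ker_eq).trans
    (QuotientAddGroup.quotientKerEquivOfSurjective fmap fsurj)⟩
end
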